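/- For every natural number r ≥ 0 one has γ^r ∈ J_r; equivalently, the residue class of γ in F_r = ℂ[α,β,γ]/J_r is nilpotent with γ^r = 0 in F_r. -/

import Mathlib

open MvPolynomial

/-- The triple (R¹_r, R²_r, R³_r) of polynomials in ℂ[α,β,γ] (α = X 0, β = X 1, γ = X 2). -/
noncomputable def Rr : ℕ → MvPolynomial (Fin 3) ℂ × MvPolynomial (Fin 3) ℂ × MvPolynomial (Fin 3) ℂ
  | 0 => (1, 0, 0)
  | (r + 1) =>
      (X 0 * (Rr r).1 + C ((r : ℂ) ^ 2) * (Rr r).2.1,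
       (X 1 + C ((-1 : ℂ) ^ (r + 1) * 8)) * (Rr r).1 + C ((2 * r : ℂ) / (r + 1)) * (Rr r).2.2,
       X 2 * (Rr r).1)

/-- The ideal J_r = (R¹_r, R²_r, R³_r) ⊆ ℂ[α,β,γ]. -/
noncomputable def Jr (r : ℕ) : Ideal (MvPolynomial (Fin 3) ℂ) :=
  Ideal.span {(Rr r).1, (Rr r).2.1, (Rr r).2.2}

/-!
Modulo `J_r`, the power `γ^k` kills both `R¹_{r-k}` and `R²_{r-k}`; for `k = r` this is
`γ^r = γ^r R¹_0 ∈ J_r`. The induction on `k` runs the recursion backwards: the relation for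
`R¹_{s+1}` recovers `s² R²_s`, and the relation for `R²_{s+2}`, with `R³_{s+1} = γ R¹_s`
substituted, recovers `γ R¹_s` up to the factor `2(s+1)/(s+2)`. Both factors are nonzero
constants, except `s² = 0` for `s = 0`, where `R²_0 = 0` anyway.
-/

local notation "γ" => (X 2 : MvPolynomial (Fin 3) ℂ)

namespace Rr

@[simp]
lemma zero_snd : (Rr 0).2.1 = 0 := rfl

@[simp]
lemma zero_fst : (Rr 0).1 = 1 := rfl

lemma succ_fst (s : ℕ) :
    (Rr (s + 1)).1 = X 0 * (Rr s).1 + C ((s : ℂ) ^ 2) * (Rr s).2.1 := by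
  rw [Rr]

lemma succ_snd (s : ℕ) :
    (Rr (s + 1)).2.1 = (X 1 + C ((-1 : ℂ) ^ (s + 1) * 8)) * (Rr s).1
      + C ((2 * s : ℂ) / (s + 1)) * (Rr s).2.2 := by
  rw [Rr]

lemma succ_thd (s : ℕ) : (Rr (s + 1)).2.2 = γ * (Rr s).1 := by
  rw [Rr]

variable {I : Ideal (MvPolynomial (Fin 3) ℂ)} {p : MvPolynomial (Fin 3) ℂ}

lemma mul_snd_mem {s : ℕ} (h₁ : p * (Rr (s + 1)).1 ∈ I) (h₀ : p * (Rr s).1 ∈ I) :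
    p * (Rr s).2.1 ∈ I := by
  cases s with
  | zero => simp
  | succ m =>
    have hc : ((m + 1 : ℕ) : ℂ) ^ 2 ≠ 0 := pow_ne_zero 2 (Nat.cast_ne_zero.mpr m.succ_ne_zero)
    rw [← I.unit_mul_mem_iff_mem (hc.isUnit.map C)]
    have key : C (((m + 1 : ℕ) : ℂ) ^ 2) * (p * (Rr (m + 1)).2.1)
        = p * (Rr (m + 2)).1 - X 0 * (p * (Rr (m + 1)).1) := by
      rw [succ_fst (m + 1)]
      ring
    rw [key]
    exact I.sub_mem h₁ (I.mul_mem_left _ h₀)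

lemma mul_X2_mul_fst_mem {s : ℕ} (h₂ : p * (Rr (s + 2)).2.1 ∈ I)
    (h₁ : p * (Rr (s + 1)).1 ∈ I) : p * γ * (Rr s).1 ∈ I := by
  have hc : (2 * ((s + 1 : ℕ) : ℂ)) / (((s + 1 : ℕ) : ℂ) + 1) ≠ 0 :=
    div_ne_zero (mul_ne_zero two_ne_zero (Nat.cast_ne_zero.mpr s.succ_ne_zero))
      (Nat.cast_add_one_ne_zero _)
  rw [← I.unit_mul_mem_iff_mem (hc.isUnit.map C)]
  have key : C ((2 * ((s + 1 : ℕ) : ℂ)) / (((s + 1 : ℕ) : ℂ) + 1)) * (p * γ * (Rr s).1)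
      = p * (Rr (s + 2)).2.1 - (X 1 + C ((-1 : ℂ) ^ (s + 2) * 8)) * (p * (Rr (s + 1)).1) := by
    rw [succ_snd (s + 1), succ_thd s]
    ring
  rw [key]
  exact I.sub_mem h₂ (I.mul_mem_left _ h₁)

lemma fst_mem_Jr (r : ℕ) : (Rr r).1 ∈ Jr r := Ideal.subset_span (by simp)

lemma snd_mem_Jr (r : ℕ) : (Rr r).2.1 ∈ Jr r := Ideal.subset_span (by simp)

lemma thd_mem_Jr (r : ℕ) : (Rr r).2.2 ∈ Jr r := Ideal.subset_span (by simp)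

end Rr

lemma X2_pow_mul_Rr_mem_Jr (r k s : ℕ) (hks : k + s = r) :
    γ ^ k * (Rr s).1 ∈ Jr r ∧ γ ^ k * (Rr s).2.1 ∈ Jr r := by
  induction k using Nat.twoStepInduction generalizing s with
  | zero =>
    subst hks
    simpa using ⟨Rr.fst_mem_Jr s, Rr.snd_mem_Jr s⟩
  | one =>
    subst hks
    rw [add_comm]
    have h₀ : γ * (Rr s).1 ∈ Jr (s + 1) := Rr.succ_thd s ▸ Rr.thd_mem_Jr (s + 1)
    have h₁ : γ * (Rr (s + 1)).1 ∈ Jr (s + 1) := (Jr _).mul_mem_left _ (Rr.fst_mem_Jr _)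
    simpa using ⟨h₀, Rr.mul_snd_mem h₁ h₀⟩
  | more k ih₀ ih₁ =>
    have h₂ : γ ^ (k + 1) * (Rr (s + 2)).2.1 ∈ Jr r := by
      rw [pow_succ', mul_assoc]
      exact (Jr r).mul_mem_left γ (ih₀ (s + 2) (by omega)).2
    have h₁ := (ih₁ (s + 1) (by omega)).1
    have h₀ : γ ^ (k + 2) * (Rr s).1 ∈ Jr r := Rr.mul_X2_mul_fst_mem h₂ h₁
    have h₁' : γ ^ (k + 2) * (Rr (s + 1)).1 ∈ Jr r := by
      rw [pow_succ', mul_assoc]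
      exact (Jr r).mul_mem_left γ h₁
    exact ⟨h₀, Rr.mul_snd_mem h₁' h₀⟩

/-- For every r ≥ 0 one has γ^r ∈ J_r; equivalently, the residue class of γ in
F_r = ℂ[α,β,γ]/J_r is nilpotent with γ^r = 0 in F_r. -/
theorem stmt10 (r : ℕ) :
    (X 2 : MvPolynomial (Fin 3) ℂ) ^ r ∈ Jr r ∧
    (Ideal.Quotient.mk (Jr r) (X 2)) ^ r = 0 := by
  have h : (X 2 : MvPolynomial (Fin 3) ℂ) ^ r ∈ Jr r := by
    simpa using (X2_pow_mul_Rr_mem_Jr r r 0 rfl).1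
  exact ⟨h, by rwa [← map_pow, Ideal.Quotient.eq_zero_iff_mem]⟩
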